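/- arXiv:2505.08974 — 4 statements merged into one kernel-verified Lean document; each statement's English description precedes it below -/
import Mathlib

section
/- Let ρ > 0 and k ≥ 1/ρ. The function f(x) = (1/x)·(ρ/x)^{kx} is convex on the interval [ρ, ∞). -/
/-!
Write `f = exp ∘ g` with `g x = k x (log ρ - log x) - log x`. Then `f'' = (g'² + g'') f`, and with
`s = 1 + log (x / ρ) ≥ 1`, `w = 1 / x` one has `g' = -(k s + w)` and `g'' = w² - k w`, so that
`g'² + g'' = k² s² + k w (2 s - 1) + 2 w² = (k s + w)² + w² - k w`: the first form is nonnegative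
when `k ≥ 0`, the second when `k ≤ 0`.
-/

open Real Set

lemma convexOn_exp_comp_of_hasDerivAt2 {D : Set ℝ} (hD : Convex ℝ D) {g g' g'' : ℝ → ℝ}
    (hg : ContinuousOn g D) (hg' : ∀ x ∈ interior D, HasDerivAt g (g' x) x)
    (hg'' : ∀ x ∈ interior D, HasDerivAt g' (g'' x) x)
    (hg''₀ : ∀ x ∈ interior D, 0 ≤ g' x ^ 2 + g'' x) :
    ConvexOn ℝ D fun x => exp (g x) := by
  refine convexOn_of_hasDerivWithinAt2_nonneg hD hg.rexp
    (fun x hx => ((hg' x hx).exp).hasDerivWithinAt) (f'' := fun x => exp (g x) * (g' x ^ 2 + g'' x))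
    (fun x hx => ((((hg' x hx).exp).mul (hg'' x hx)).congr_deriv (by ring)).hasDerivWithinAt)
    fun x hx => mul_nonneg (exp_nonneg _) (hg''₀ x hx)

lemma sq_add_sq_sub_mul_nonneg {k s w : ℝ} (hs : 1 ≤ 2 * s) (hw : 0 ≤ w) :
    0 ≤ (k * s + w) ^ 2 + (w ^ 2 - k * w) := by
  rcases le_total 0 k with hk | hk
  · have hmid : 0 ≤ k * w * (2 * s - 1) := mul_nonneg (mul_nonneg hk hw) (by linarith)
    nlinarith [sq_nonneg (k * s), sq_nonneg w]
  · nlinarith [sq_nonneg (k * s + w), sq_nonneg w, mul_nonpos_of_nonpos_of_nonneg hk hw]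

section Exponent

variable (ρ k : ℝ) {x : ℝ}

lemma hasDerivAt_exponent (hx : 0 < x) :
    HasDerivAt (fun x => k * x * (log ρ - log x) - log x)
      (k * (log ρ - log x) - k - x⁻¹) x := by
  have hlog := hasDerivAt_log hx.ne'
  refine ((((hasDerivAt_id' x).const_mul k).mul (hlog.const_sub (log ρ))).sub hlog).congr_deriv ?_
  field_simp
  ring

lemma hasDerivAt_deriv_exponent (hx : x ≠ 0) :
    HasDerivAt (fun x => k * (log ρ - log x) - k - x⁻¹) (x⁻¹ ^ 2 - k * x⁻¹) x := by
  refine (((((hasDerivAt_log hx).const_sub (log ρ)).const_mul k).sub_const k).sub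
    (hasDerivAt_inv hx)).congr_deriv ?_
  ring

lemma sq_deriv_exponent_add_nonneg (hρ : 0 < ρ) (hx : ρ ≤ x) :
    0 ≤ (k * (log ρ - log x) - k - x⁻¹) ^ 2 + (x⁻¹ ^ 2 - k * x⁻¹) := by
  have hs : 1 ≤ 2 * (1 + (log x - log ρ)) := by linarith [log_le_log hρ hx]
  convert sq_add_sq_sub_mul_nonneg (k := k) hs (inv_nonneg.2 (hρ.le.trans hx)) using 2
  ring

end Exponent

theorem f_convexOn_general (ρ k : ℝ) (hρ : 0 < ρ)
    (f : ℝ → ℝ)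
    (hf : ∀ x : ℝ, f x = (1 / x) * Real.exp (k * x * (Real.log ρ - Real.log x))) :
    ConvexOn ℝ (Set.Ici ρ) f := by
  have hpos : ∀ x ∈ Ici ρ, 0 < x := fun x hx => hρ.trans_le hx
  refine (convexOn_exp_comp_of_hasDerivAt2 (convex_Ici ρ)
    (fun x hx => (hasDerivAt_exponent ρ k (hpos x hx)).continuousAt.continuousWithinAt)
    (fun x hx => hasDerivAt_exponent ρ k (hpos x (interior_subset hx)))
    (fun x hx => hasDerivAt_deriv_exponent ρ k (hpos x (interior_subset hx)).ne')
    fun x hx => sq_deriv_exponent_add_nonneg ρ k hρ (interior_subset hx)).congr fun x hx => ?_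
  dsimp only
  rw [hf, exp_sub, exp_log (hpos x hx)]
  ring

/-- For ρ > 0 and k ≥ 1/ρ, the function f(x) = (1/x)·(ρ/x)^{kx}
    = (1/x)·exp(kx(log ρ − log x)) is convex on [ρ, ∞). -/
theorem f_convexOn (ρ k : ℝ) (hρ : 0 < ρ) (hk : 1 / ρ ≤ k)
    (f : ℝ → ℝ)
    (hf : ∀ x : ℝ, f x = (1 / x) * Real.exp (k * x * (Real.log ρ - Real.log x))) :
    ConvexOn ℝ (Set.Ici ρ) f :=
  f_convexOn_general ρ k hρ f hf
end

section
/- Let ρ > 0 and k ≥ 1/ρ, and let f(x) = (1/x)·(ρ/x)^{kx}. If x₀ > 0 satisfies f''(x₀) = 0, then x₀ < ρ. Consequently f'' has no zeros on [ρ, ∞). -/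
/-!
Writing `f = exp ∘ g` with `g x = k x (log ρ - log x) - log x`, one gets
`f'' = exp g · (g'² + g'')`, where `g' x = k (log ρ - log x) - k - 1/x` and
`g'' x = (1/x - k)/x`. For `x ≥ ρ` and `k ≥ 0` we have `-g' x ≥ k + 1/x > 0`, so
`g'² + g'' ≥ (k + 1/x)² - k/x + 1/x² = k² + k/x + 2/x² > 0`; hence `f''` is positive on `[ρ, ∞)`.
-/

open Real Set Filter

theorem deriv_deriv_eq_exp_mul_of_eqOn {f g g' g'' : ℝ → ℝ} {s : Set ℝ} {x : ℝ}
    (hs : IsOpen s) (hfg : EqOn f (fun y => exp (g y)) s)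
    (hg : ∀ y ∈ s, HasDerivAt g (g' y) y) (hg' : ∀ y ∈ s, HasDerivAt g' (g'' y) y)
    (hx : x ∈ s) :
    deriv (deriv f) x = exp (g x) * (g' x ^ 2 + g'' x) := by
  have hderiv : EqOn (deriv f) (fun y => exp (g y) * g' y) s := fun y hy => by
    rw [(eventuallyEq_of_mem (hs.mem_nhds hy) hfg).deriv_eq]
    exact (hg y hy).exp.deriv
  rw [(eventuallyEq_of_mem (hs.mem_nhds hx) hderiv).deriv_eq,
    ((hg x hx).exp.fun_mul (hg' x hx)).deriv]
  ring

section LogExponent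

variable (ρ k : ℝ) {x : ℝ}

theorem hasDerivAt_mul_log_div_sub_log (hx : x ≠ 0) :
    HasDerivAt (fun y => k * y * (log ρ - log y) - log y)
      (k * (log ρ - log x) - k - x⁻¹) x := by
  have hlog := hasDerivAt_log hx
  have h := (((hasDerivAt_id' x).const_mul k).fun_mul
    ((hasDerivAt_const x (log ρ)).fun_sub hlog)).fun_sub hlog
  refine h.congr_deriv ?_
  field_simp
  ring

theorem hasDerivAt_mul_log_div_sub_inv (hx : x ≠ 0) :
    HasDerivAt (fun y => k * (log ρ - log y) - k - y⁻¹) ((x⁻¹ - k) * x⁻¹) x := by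
  have h := ((((hasDerivAt_const x (log ρ)).fun_sub (hasDerivAt_log hx)).const_mul k).sub_const
    k).fun_sub (hasDerivAt_inv hx)
  refine h.congr_deriv ?_
  ring

variable {ρ k}

theorem sq_deriv_add_deriv_pos_of_le (hρ : 0 < ρ) (hk : 0 ≤ k) (hx : ρ ≤ x) :
    0 < (k * (log ρ - log x) - k - x⁻¹) ^ 2 + (x⁻¹ - k) * x⁻¹ := by
  have hxinv : 0 < x⁻¹ := inv_pos.mpr (hρ.trans_le hx)
  have hlog : k * (log ρ - log x) ≤ 0 :=
    mul_nonpos_of_nonneg_of_nonpos hk (sub_nonpos.mpr (log_le_log hρ hx))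
  have hbound : k + x⁻¹ ≤ -(k * (log ρ - log x) - k - x⁻¹) := by linarith
  nlinarith [mul_self_le_mul_self (by positivity) hbound]

end LogExponent

/-- For ρ > 0 and k ≥ 1/ρ, if x₀ > 0 is a zero of the second derivative of
    f(x) = (1/x)·(ρ/x)^{kx}, then x₀ < ρ; consequently f'' has no zeros on [ρ, ∞). -/
theorem second_deriv_no_zero_on_Ici (ρ k : ℝ) (hρ : 0 < ρ) (hk : 1 / ρ ≤ k)
    (f : ℝ → ℝ)
    (hf : ∀ x : ℝ, f x = (1 / x) * Real.exp (k * x * (Real.log ρ - Real.log x))) :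
    (∀ x₀ : ℝ, 0 < x₀ → deriv (deriv f) x₀ = 0 → x₀ < ρ) ∧
      (∀ x : ℝ, ρ ≤ x → deriv (deriv f) x ≠ 0) := by
  have hfexp : EqOn f (fun y => exp (k * y * (log ρ - log y) - log y)) (Ioi 0) := by
    intro y hy
    simp only [hf, exp_sub, exp_log (mem_Ioi.mp hy)]
    ring
  have hk0 : 0 ≤ k := (one_div_pos.mpr hρ).le.trans hk
  have hpos : ∀ x, ρ ≤ x → 0 < deriv (deriv f) x := by
    intro x hx
    have hx0 : x ∈ Ioi (0 : ℝ) := hρ.trans_le hx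
    rw [deriv_deriv_eq_exp_mul_of_eqOn isOpen_Ioi hfexp
      (fun y hy => hasDerivAt_mul_log_div_sub_log ρ k (ne_of_gt hy))
      (fun y hy => hasDerivAt_mul_log_div_sub_inv ρ k (ne_of_gt hy)) hx0]
    exact mul_pos (exp_pos _) (sq_deriv_add_deriv_pos_of_le hρ hk0 hx)
  exact ⟨fun x₀ _ hzero => not_le.mp fun hx => (hpos x₀ hx).ne' hzero,
    fun x hx => (hpos x hx).ne'⟩
end

section
/- Consider the bipartite graph G_n^2 consisting of n+1 connected components: one component with a single dispatcher d_0 adjacent to n servers v_1, …, v_n, and n components each with a single dispatcher d_k adjacent to a single server u_k (1 ≤ k ≤ n). Then the flexibility metrics satisfy α_{G_n^2} = (n+1)/2 and β_{G_n^2} = 2n/(n+1), and consequently α_{G_n^2}/β_{G_n^2} → ∞ as n → ∞. -/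
/-!
Every server of `G_n^2` has a single neighbouring dispatcher, so the minimum in `α` is the degree
of that dispatcher: `n` for each `v_j` and `1` for each `u_k`, whence `α = (n·n + n·1)/(2n)`.
The degrees sum to `n + n·1 = 2n` over `n + 1` dispatchers. The ratio `α/β = (n+1)²/(4n)`
dominates `n/4`.
-/

open Filter

/-- `inl j` encodes the server `v_j` and `inr k` the server `u_k`; dispatcher `d_k` is `k.succ`. -/
def gn2Adj (n : ℕ) (d : Fin (n + 1)) : Fin n ⊕ Fin n → Prop :=
  Sum.elim (fun _ => (d : ℕ) = 0) (fun k => (d : ℕ) = (k : ℕ) + 1)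

namespace gn2Adj

variable {n : ℕ}

theorem inl_iff (d : Fin (n + 1)) (j : Fin n) : gn2Adj n d (.inl j) ↔ d = 0 :=
  Fin.val_eq_zero_iff

theorem inr_iff (d : Fin (n + 1)) (k : Fin n) : gn2Adj n d (.inr k) ↔ d = k.succ := by
  rw [Fin.ext_iff, Fin.val_succ, gn2Adj, Sum.elim_inr]

theorem card_zero : Nat.card {u // gn2Adj n 0 u} = n := by
  have : {u | gn2Adj n 0 u} = Set.range Sum.inl := by
    ext (j | k) <;> simp [inl_iff, inr_iff, (Fin.succ_ne_zero _).symm]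
  rw [← Set.coe_ofPred, this, Nat.card_range_of_injective Sum.inl_injective, Nat.card_eq_fintype_card,
    Fintype.card_fin]

theorem card_succ (k : Fin n) : Nat.card {u // gn2Adj n k.succ u} = 1 := by
  have : {u | gn2Adj n k.succ u} = {.inr k} := by
    ext (j | l) <;> simp [inl_iff, inr_iff, eq_comm]
  rw [← Set.coe_ofPred, this, Nat.card_unique]

end gn2Adj

theorem sInf_setOf_exists_eq_of_forall_iff_eq {D S : Type*} {E : D → S → Prop} (f : D → ℕ)
    {u : S} {d₀ : D} (h : ∀ d, E d u ↔ d = d₀) :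
    sInf {m : ℕ | ∃ d, E d u ∧ f d = m} = f d₀ := by
  have : {m : ℕ | ∃ d, E d u ∧ f d = m} = {f d₀} := by
    ext m
    simp [h, eq_comm]
  rw [this, csInf_singleton]

theorem tendsto_succ_div_two_div_two_mul_div_succ_atTop :
    Tendsto (fun m : ℕ => (((m : ℝ) + 1) / 2) / (2 * (m : ℝ) / ((m : ℝ) + 1))) atTop atTop := by
  refine tendsto_atTop_mono' _ ?_ (tendsto_natCast_atTop_atTop.atTop_div_const (by norm_num : (0 : ℝ) < 4))
  filter_upwards [eventually_ge_atTop 1] with m hm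
  have hm : (1 : ℝ) ≤ m := by exact_mod_cast hm
  have hratio : (((m : ℝ) + 1) / 2) / (2 * (m : ℝ) / ((m : ℝ) + 1)) = ((m : ℝ) + 1) ^ 2 / (4 * m) := by
    field_simp
    ring
  rw [hratio, div_le_div_iff₀ (by norm_num) (by positivity)]
  nlinarith

/-- Example G_n^2 of the paper: n+1 connected components, one dispatcher d_0 adjacent
    to n servers v_1,…,v_n, and n dispatchers d_k each adjacent to a single server u_k.
    Then α_{G_n^2} = (n+1)/2 and β_{G_n^2} = 2n/(n+1); consequently the ratio
    α_{G_n^2}/β_{G_n^2} tends to infinity. -/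
theorem example_Gn2_metrics
    (n : ℕ) (hn : 1 ≤ n)
    (E : Fin (n + 1) → (Fin n ⊕ Fin n) → Prop)
    (hE : ∀ (d : Fin (n + 1)) (u : Fin n ⊕ Fin n),
      E d u ↔ (match u with
        | Sum.inl _ => (d : ℕ) = 0
        | Sum.inr k => (d : ℕ) = (k : ℕ) + 1))
    (deg : Fin (n + 1) → ℕ)
    (hdeg : ∀ d, deg d = Nat.card {u : Fin n ⊕ Fin n // E d u})
    (α β : ℝ)
    (hα : α = (1 / (Fintype.card (Fin n ⊕ Fin n) : ℝ)) *
      ∑ u : Fin n ⊕ Fin n, ((sInf {m : ℕ | ∃ d, E d u ∧ deg d = m} : ℕ) : ℝ))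
    (hβ : β = (1 / (Fintype.card (Fin (n + 1)) : ℝ)) * ∑ d : Fin (n + 1), (deg d : ℝ)) :
    (α = ((n : ℝ) + 1) / 2 ∧ β = 2 * (n : ℝ) / ((n : ℝ) + 1)) ∧
      Filter.Tendsto
        (fun m : ℕ => (((m : ℝ) + 1) / 2) / (2 * (m : ℝ) / ((m : ℝ) + 1)))
        Filter.atTop Filter.atTop := by
  obtain rfl : E = gn2Adj n := funext₂ fun d u => propext <| (hE d u).trans <| by cases u <;> rfl
  have hdeg_zero : deg 0 = n := (hdeg 0).trans gn2Adj.card_zero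
  have hdeg_succ (k : Fin n) : deg k.succ = 1 := (hdeg k.succ).trans (gn2Adj.card_succ k)
  have hmin_inl (j : Fin n) : sInf {m | ∃ d, gn2Adj n d (.inl j) ∧ deg d = m} = n :=
    (sInf_setOf_exists_eq_of_forall_iff_eq deg (gn2Adj.inl_iff · j)).trans hdeg_zero
  have hmin_inr (k : Fin n) : sInf {m | ∃ d, gn2Adj n d (.inr k) ∧ deg d = m} = 1 :=
    (sInf_setOf_exists_eq_of_forall_iff_eq deg (gn2Adj.inr_iff · k)).trans (hdeg_succ k)
  have hn_ne : (n : ℝ) ≠ 0 := by positivity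
  refine ⟨⟨?_, ?_⟩, tendsto_succ_div_two_div_two_mul_div_succ_atTop⟩
  · simp only [hα, Fintype.sum_sum_type, hmin_inl, hmin_inr, Fintype.card_sum, Fintype.card_fin,
      Finset.sum_const, Finset.card_univ, nsmul_eq_mul, Nat.cast_add, Nat.cast_one, mul_one]
    field_simp
    ring
  · simp only [hβ, Fin.sum_univ_succ, hdeg_zero, hdeg_succ, Fintype.card_fin, Finset.sum_const,
      Finset.card_univ, nsmul_eq_mul, Nat.cast_add, Nat.cast_one, mul_one]
    field_simp
    ring
end

section
/- Let ρ > 0, k ≥ 1/ρ, and let x, y be real numbers with ρ ≤ x ≤ y. Then (1/x)·(ρ/x)^{kx} ≥ (1/y)·(ρ/y)^{ky}, i.e., the geometric lower bound function f(x) = (ρ/x)^{kx}/x is monotone nonincreasing on [ρ, ∞); in particular, for a bipartite graph G with ρ ≤ α_G ≤ θ_G one has [r(ρ, α_G)]^k/α_G ≥ [r(ρ, θ_G)]^k/θ_G where r(ρ, x) = (ρ/x)^x. -/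
open Real Set

/-! On `[ρ, ∞)` the base `ρ / x` lies in `(0, 1]` and decreases while the exponent `k x`
grows, so `(ρ / x) ^ (k x)` decreases; multiplying by the decreasing positive factor `1 / x`
keeps it so. -/

lemma antitoneOn_div_rpow_mul_self {ρ k : ℝ} (hρ : 0 < ρ) (hk : 0 ≤ k) :
    AntitoneOn (fun x => (ρ / x) ^ (k * x)) (Ici ρ) := by
  intro x (hx : ρ ≤ x) y (hy : ρ ≤ y) hxy
  have hx0 : 0 < x := hρ.trans_le hx
  have hy0 : 0 < y := hρ.trans_le hy
  calc (ρ / y) ^ (k * y)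
      ≤ (ρ / x) ^ (k * y) :=
        rpow_le_rpow (by positivity) (div_le_div_of_nonneg_left hρ.le hx0 hxy) (by positivity)
    _ ≤ (ρ / x) ^ (k * x) :=
        rpow_le_rpow_of_exponent_ge (by positivity) ((div_le_one hx0).2 hx)
          (mul_le_mul_of_nonneg_left hxy hk)

lemma antitoneOn_one_div_mul_div_rpow_mul_self {ρ k : ℝ} (hρ : 0 < ρ) (hk : 0 ≤ k) :
    AntitoneOn (fun x => 1 / x * (ρ / x) ^ (k * x)) (Ici ρ) := by
  intro x (hx : ρ ≤ x) y (hy : ρ ≤ y) hxy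
  have hx0 : 0 < x := hρ.trans_le hx
  have hy0 : 0 < y := hρ.trans_le hy
  exact mul_le_mul (one_div_le_one_div_of_le hx0 hxy)
    (antitoneOn_div_rpow_mul_self hρ hk hx hy hxy) (by positivity) (by positivity)

/-- For ρ > 0 and k ≥ 1/ρ, the function f(x) = (ρ/x)^{kx}/x is nonincreasing on
    [ρ, ∞); in particular, for ρ ≤ α_G ≤ θ_G one has
    [r(ρ,α_G)]^k/α_G ≥ [r(ρ,θ_G)]^k/θ_G where r(ρ,x) = (ρ/x)^x. -/
theorem geometric_bound_antitone (ρ k : ℝ) (hρ : 0 < ρ) (hk : 1 / ρ ≤ k) :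
    (∀ x y : ℝ, ρ ≤ x → x ≤ y →
        (1 / y) * (ρ / y) ^ (k * y) ≤ (1 / x) * (ρ / x) ^ (k * x)) ∧
      (∀ αG θG : ℝ, ρ ≤ αG → αG ≤ θG →
        ((ρ / θG) ^ θG) ^ k / θG ≤ ((ρ / αG) ^ αG) ^ k / αG) := by
  have hanti := antitoneOn_one_div_mul_div_rpow_mul_self hρ ((one_div_pos.2 hρ).le.trans hk)
  have hmono : ∀ x y : ℝ, ρ ≤ x → x ≤ y →
      1 / y * (ρ / y) ^ (k * y) ≤ 1 / x * (ρ / x) ^ (k * x) :=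
    fun x y hx hxy => hanti (mem_Ici.2 hx) (mem_Ici.2 (hx.trans hxy)) hxy
  have hrpow_eq : ∀ x : ℝ, ρ ≤ x → ((ρ / x) ^ x) ^ k / x = 1 / x * (ρ / x) ^ (k * x) := by
    intro x hx
    rw [← rpow_mul (div_nonneg hρ.le (hρ.le.trans hx)), mul_comm x k, div_eq_inv_mul, one_div]
  refine ⟨hmono, fun αG θG hα hαθ => ?_⟩
  rw [hrpow_eq αG hα, hrpow_eq θG (hα.trans hαθ)]
  exact hmono αG θG hα hαθ
end
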